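/- arXiv:1610.07923 — 3 statements merged into one kernel-verified Lean document; each statement's English description precedes it below -/
import Mathlib

section
/- For an endomorphism φ of an infinite subshift, the limits α^+(φ) = lim_{n→∞} W^+(n, φ)/n and α^-(φ) = lim_{n→∞} W^-(n, φ)/n exist and are finite; moreover if D is at least the range of the block code of φ, then |W^+(n)| ≤ Dn and |W^-(n)| ≤ Dn for all n ≥ 0. -/
open Filter Topology

/-- The left shift on bi-infinite sequences. -/
def shift {A : Type*} (x : ℤ → A) : ℤ → A := fun n => x (n + 1)

/-- The shift by `k` places (`σ^k`). -/
def zshift {A : Type*} (k : ℤ) (x : ℤ → A) : ℤ → A := fun n => x (n + k)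

/-- A subshift: a closed, shift-invariant subset of `Σ^ℤ`. -/
def IsSubshift {A : Type*} [TopologicalSpace A] (X : Set (ℤ → A)) : Prop :=
  IsClosed X ∧ shift '' X = X

/-- An endomorphism of the subshift `X`: a continuous shift-commuting surjection of `X`. -/
structure IsEndo {A : Type*} [TopologicalSpace A] (X : Set (ℤ → A))
    (φ : (ℤ → A) → (ℤ → A)) : Prop where
  maps : Set.MapsTo φ X X
  surj : Set.SurjOn φ X X
  cont : ContinuousOn φ X
  comm : ∀ x ∈ X, φ (shift x) = shift (φ x)

/-- `S` φ-codes `T`: agreement of two points of `X` on `S` forces agreement of their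
φ-images on `T`. -/
def Codes {A : Type*} (X : Set (ℤ → A)) (φ : (ℤ → A) → (ℤ → A)) (S T : Set ℤ) : Prop :=
  ∀ x ∈ X, ∀ y ∈ X, (∀ i ∈ S, x i = y i) → ∀ j ∈ T, φ x j = φ y j

/-- The set of integers `W` such that `[0,∞)` φⁿ-codes `[W,∞)`; `W⁺(n,φ)` is its
least element. -/
def WplusSet {A : Type*} (X : Set (ℤ → A)) (φ : (ℤ → A) → (ℤ → A)) (n : ℕ) : Set ℤ :=
  {W | Codes X (φ^[n]) (Set.Ici 0) (Set.Ici W)}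

/-- The set of integers `W` such that `(-∞,0]` φⁿ-codes `(-∞,W]`; `W⁻(n,φ)` is its
greatest element. -/
def WminusSet {A : Type*} (X : Set (ℤ → A)) (φ : (ℤ → A) → (ℤ → A)) (n : ℕ) : Set ℤ :=
  {W | Codes X (φ^[n]) (Set.Iic 0) (Set.Iic W)}

/-- A subshift of finite type: defined by a finite set of excluded words. -/
def IsSFT {A : Type*} (X : Set (ℤ → A)) : Prop :=
  ∃ F : Set (List A), F.Finite ∧
    ∀ x : ℤ → A, x ∈ X ↔ ∀ (n : ℤ), ∀ w ∈ F, ∃ i : Fin w.length, x (n + i) ≠ w.get i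


/-!
Composing codings shows that `W⁺` is subadditive and `W⁻` superadditive, so Fekete's lemma gives
the limits once `W⁺(n)/n` is bounded below and `W⁻(n)/n` above. If `φ` has radius `D` then `φⁿ`
has radius `Dn`, whence `W⁺(n) ≤ Dn`. Conversely, if `[0,∞)` `φⁿ`-coded `[W,∞)` with
`W < -Dn`, then by compactness and the radius bound the words of `X` on `[0,m)` would determine
those on a window of length `m + (-W - Dn) > m`; as `φⁿ` is onto, the number of words of length
`m` would be eventually non-increasing, hence bounded, and `X` would be finite. Reflecting `ℤ`
turns `W⁻` into `W⁺`.
-/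

open Set Function

section Shift

variable {A : Type*} {X : Set (ℤ → A)} {ψ : (ℤ → A) → ℤ → A}

lemma zshift_zero (x : ℤ → A) : zshift 0 x = x := by
  funext n; simp [zshift]

lemma zshift_zshift (a b : ℤ) (x : ℤ → A) : zshift a (zshift b x) = zshift (a + b) x := by
  funext n; simp [zshift, add_assoc]

lemma zshift_one : zshift 1 = (shift : (ℤ → A) → ℤ → A) := rfl

lemma shift_injective : Injective (shift : (ℤ → A) → ℤ → A) := fun x y h => by
  funext n; simpa [shift] using congrFun h (n - 1)

lemma image_shift_image_zshift (k : ℤ) : shift '' (zshift k '' X) = zshift (1 + k) '' X := by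
  simp only [image_image, ← zshift_one, zshift_zshift]

lemma image_zshift_eq (hX : shift '' X = X) (k : ℤ) : zshift k '' X = X := by
  induction k using Int.induction_on with
  | zero => simp [zshift_zero]
  | succ k ih => rw [add_comm, ← image_shift_image_zshift, ih, hX]
  | pred k ih =>
    apply shift_injective.image_injective
    rw [image_shift_image_zshift, hX, show 1 + (-k - 1 : ℤ) = -k by ring, ih]

lemma zshift_mem (hX : shift '' X = X) (k : ℤ) {x : ℤ → A} (hx : x ∈ X) : zshift k x ∈ X :=
  image_zshift_eq hX k ▸ mem_image_of_mem _ hx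

lemma map_zshift (hX : shift '' X = X) (hψ : ∀ x ∈ X, ψ (shift x) = shift (ψ x)) (k : ℤ)
    {x : ℤ → A} (hx : x ∈ X) : ψ (zshift k x) = zshift k (ψ x) := by
  have hnat : ∀ k : ℕ, ∀ x ∈ X, ψ (zshift k x) = zshift k (ψ x) := by
    intro k
    induction k with
    | zero => simp [zshift_zero]
    | succ k ih =>
      intro x hx
      rw [Nat.cast_succ, add_comm, ← zshift_zshift, ← zshift_zshift, zshift_one,
        hψ _ (zshift_mem hX k hx), ih x hx]
  obtain ⟨k, rfl | rfl⟩ := Int.eq_nat_or_neg k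
  · exact hnat k x hx
  · calc ψ (zshift (-k) x) = zshift (-k) (zshift k (ψ (zshift (-k) x))) := by
          rw [zshift_zshift, neg_add_cancel, zshift_zero]
      _ = zshift (-k) (ψ x) := by
          rw [← hnat k _ (zshift_mem hX _ hx), zshift_zshift, add_neg_cancel, zshift_zero]

end Shift

section Codes

variable {A : Type*} {X : Set (ℤ → A)} {ψ χ : (ℤ → A) → ℤ → A} {S S' T T' U : Set ℤ}

lemma Codes.mono (hS : S ⊆ S') (hT : T' ⊆ T) (h : Codes X ψ S T) : Codes X ψ S' T' :=
  fun x hx y hy hxy j hj => h x hx y hy (fun i hi => hxy i (hS hi)) j (hT hj)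

lemma Codes.union (h : Codes X ψ S T) (h' : Codes X ψ S T') : Codes X ψ S (T ∪ T') :=
  fun x hx y hy hxy j hj => hj.elim (h x hx y hy hxy j) (h' x hx y hy hxy j)

lemma codes_of_forall_singleton (h : ∀ j ∈ T, Codes X ψ S {j}) : Codes X ψ S T :=
  fun x hx y hy hxy j hj => h j hj x hx y hy hxy j rfl

lemma Codes.comp (hψ : MapsTo ψ X X) (h : Codes X ψ S T) (h' : Codes X χ T U) :
    Codes X (χ ∘ ψ) S U :=
  fun x hx y hy hxy => h' _ (hψ hx) _ (hψ hy) (h x hx y hy hxy)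

lemma Codes.translate (hX : shift '' X = X) (hψ : ∀ x ∈ X, ψ (shift x) = shift (ψ x))
    (h : Codes X ψ S T) (k : ℤ) : Codes X ψ ((· + k) '' S) ((· + k) '' T) := by
  rintro x hx y hy hxy _ ⟨j, hj, rfl⟩
  have := h _ (zshift_mem hX k hx) _ (zshift_mem hX k hy)
    (fun i hi => hxy (i + k) ⟨i, hi, rfl⟩) j hj
  rwa [map_zshift hX hψ k hx, map_zshift hX hψ k hy] at this

lemma Codes.icc_of_radius (hX : shift '' X = X) (hψ : ∀ x ∈ X, ψ (shift x) = shift (ψ x))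
    {R : ℤ} (h : Codes X ψ (Icc (-R) R) {0}) (a b : ℤ) :
    Codes X ψ (Icc (a - R) (b + R)) (Icc a b) := by
  refine codes_of_forall_singleton fun j hj => (h.translate hX hψ j).mono ?_ (by simp)
  rw [image_add_const_Icc]
  exact Icc_subset_Icc (by linarith [hj.1]) (by linarith [hj.2])

end Codes

section Endo

variable {A : Type*} [TopologicalSpace A] {X : Set (ℤ → A)} {φ : (ℤ → A) → ℤ → A}

lemma IsEndo.iterate (hφ : IsEndo X φ) (n : ℕ) : IsEndo X φ^[n] where
  maps := hφ.maps.iterate n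
  surj := hφ.surj.iterate n
  cont := hφ.cont.iterate hφ.maps n
  comm := by
    induction n with
    | zero => simp
    | succ n ih =>
      intro x hx
      rw [iterate_succ_apply, iterate_succ_apply, hφ.comm x hx, ih _ (hφ.maps hx)]

lemma IsEndo.codes_iterate_radius (hX : shift '' X = X) (hφ : IsEndo X φ) {R : ℤ}
    (hR : Codes X φ (Icc (-R) R) {0}) (n : ℕ) : Codes X φ^[n] (Icc (-(R * n)) (R * n)) {0} := by
  induction n with
  | zero =>
    rintro x - y - hxy _ rfl
    exact hxy 0 (by simp)
  | succ n ih =>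
    rw [iterate_succ]
    refine Codes.comp hφ.maps ((hR.icc_of_radius hX hφ.comm _ _).mono ?_ subset_rfl) ih
    exact Icc_subset_Icc (by push_cast; linarith) (by push_cast; linarith)

lemma add_mem_wplusSet (hX : shift '' X = X) (hφ : IsEndo X φ) {a b : ℤ} {m n : ℕ}
    (ha : a ∈ WplusSet X φ m) (hb : b ∈ WplusSet X φ n) : a + b ∈ WplusSet X φ (m + n) := by
  have ha' := ha.translate hX (hφ.iterate m).comm b
  rw [image_add_const_Ici, image_add_const_Ici, zero_add] at ha'
  rw [WplusSet, mem_ofPred_eq, iterate_add]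
  exact hb.comp (hφ.maps.iterate n) ha'

lemma mul_mem_wplusSet (hX : shift '' X = X) (hφ : IsEndo X φ) {R : ℤ}
    (hR : Codes X φ (Icc (-R) R) {0}) (n : ℕ) : R * n ∈ WplusSet X φ n :=
  codes_of_forall_singleton fun j hj =>
    ((hφ.codes_iterate_radius hX hR n).icc_of_radius hX (hφ.iterate n).comm j j).mono
      (fun i hi => mem_Ici.2 (by linarith [hi.1, mem_Ici.1 hj])) (by simp)

end Endo

lemma Codes.exists_finset {A : Type*} [Finite A] [TopologicalSpace A] [DiscreteTopology A]
    {X : Set (ℤ → A)} {ψ : (ℤ → A) → ℤ → A} {S T : Set ℤ} (hX : IsClosed X)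
    (hψ : ContinuousOn ψ X) (hT : T.Finite) (h : Codes X ψ S T) :
    ∃ F : Finset ℤ, ↑F ⊆ S ∧ Codes X ψ F T := by
  have : CompactSpace X := isCompact_iff_compactSpace.1 hX.isCompact
  -- pairs of points whose images differ somewhere on `T` form a compact set, covered by the
  -- open sets of pairs that differ at a given coordinate of `S`
  let f : ℤ → X × X → A × A := fun j p => (X.domRestrict ψ p.1 j, X.domRestrict ψ p.2 j)
  have hf : ∀ j, Continuous (f j) := fun j =>
    (((continuous_apply j).comp hψ.domRestrict).comp continuous_fst).prodMk
      (((continuous_apply j).comp hψ.domRestrict).comp continuous_snd)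
  let K := ⋃ j ∈ T, f j ⁻¹' {q | q.1 ≠ q.2}
  have hK : IsCompact K :=
    (hT.isClosed_biUnion fun j _ => (isClosed_discrete _).preimage (hf j)).isCompact
  let Z : S → Set (X × X) := fun i => {p | p.1.1 i = p.2.1 i}
  have hZ : ∀ i, IsClosed (Z i) := fun i =>
    isClosed_eq ((continuous_apply _).comp (continuous_subtype_val.comp continuous_fst))
      ((continuous_apply _).comp (continuous_subtype_val.comp continuous_snd))
  have hKZ : K ∩ ⋂ i, Z i = ∅ := by
    ext ⟨⟨x, hx⟩, ⟨y, hy⟩⟩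
    simp only [K, Z, f, mem_inter_iff, mem_iUnion, mem_iInter, mem_preimage, mem_ofPred_eq,
      mem_empty_iff_false, iff_false, not_and, Subtype.forall]
    rintro ⟨j, hj, hne⟩ hxy
    exact hne (h x hx y hy hxy j hj)
  obtain ⟨t, ht⟩ := hK.elim_finite_subfamily_closed Z hZ hKZ
  refine ⟨t.map (Embedding.subtype _), by simp, fun x hx y hy hxy j hj => ?_⟩
  by_contra hne
  have hmem : (⟨⟨x, hx⟩, ⟨y, hy⟩⟩ : X × X) ∈ K ∩ ⋂ i ∈ t, Z i :=
    ⟨mem_biUnion hj hne, mem_iInter₂.2 fun i hi => hxy i (Finset.mem_map_of_mem _ hi)⟩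
  rwa [ht] at hmem

lemma ncard_image_le_ncard_image_of_fiberwise {α β γ : Type*} {s : Set α} {f : α → β} {g : α → γ}
    (hfg : ∀ x ∈ s, ∀ y ∈ s, g x = g y → f x = f y) (hg : (g '' s).Finite) :
    (f '' s).ncard ≤ (g '' s).ncard := by
  rcases s.eq_empty_or_nonempty with rfl | ⟨x₀, -⟩
  · simp
  have : Nonempty α := ⟨x₀⟩
  refine ncard_le_ncard_of_injOn (fun z => g (invFunOn f s z))
    (fun z hz => mem_image_of_mem g (invFunOn_mem hz)) ?_ hg
  intro z hz z' hz' hgz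
  rw [← invFunOn_eq hz, ← invFunOn_eq hz']
  exact hfg _ (invFunOn_mem hz) _ (invFunOn_mem hz') hgz

section Complexity

variable {A : Type*} {X : Set (ℤ → A)} {ψ : (ℤ → A) → ℤ → A}

def window (a : ℤ) (m : ℕ) (x : ℤ → A) : Fin m → A := fun i => x (a + i)

noncomputable def complexity (X : Set (ℤ → A)) (m : ℕ) : ℕ := (window 0 m '' X).ncard

lemma window_eq_window_iff {a : ℤ} {m : ℕ} {x y : ℤ → A} :
    window a m x = window a m y ↔ ∀ i ∈ Ico a (a + m), x i = y i := by
  constructor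
  · rintro h i ⟨hai, hia⟩
    have := congrFun h ⟨(i - a).toNat, by omega⟩
    simpa [window, Int.toNat_of_nonneg (sub_nonneg.2 hai)] using this
  · intro h
    funext i
    exact h _ ⟨by omega, by omega⟩

lemma window_zshift (a : ℤ) (m : ℕ) (x : ℤ → A) : window 0 m (zshift a x) = window a m x := by
  funext i
  simp only [window, zshift]
  ring_nf

lemma ncard_image_window (hX : shift '' X = X) (a : ℤ) (m : ℕ) :
    (window a m '' X).ncard = complexity X m := by
  calc (window a m '' X).ncard = (window 0 m '' (zshift a '' X)).ncard := by
        simp only [image_image, window_zshift]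
    _ = complexity X m := by rw [image_zshift_eq hX a, complexity]

lemma complexity_mono [Finite A] : Monotone (complexity X) := fun m m' hm =>
  ncard_image_le_ncard_image_of_fiberwise (fun x _ y _ hxy => window_eq_window_iff.2 fun i hi =>
    window_eq_window_iff.1 hxy i ⟨hi.1, hi.2.trans_le (by simpa using hm)⟩) (toFinite _)

lemma complexity_le_of_codes [Finite A] (hX : shift '' X = X) (hψ : SurjOn ψ X X) {a b : ℤ}
    {m m' : ℕ} (h : Codes X ψ (Ico a (a + m)) (Ico b (b + m'))) :
    complexity X m' ≤ complexity X m := by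
  rw [← ncard_image_window hX b, ← ncard_image_window hX a]
  calc (window b m' '' X).ncard ≤ ((window b m' ∘ ψ) '' X).ncard :=
        ncard_le_ncard (by rw [image_comp]; exact image_mono hψ) (toFinite _)
    _ ≤ (window a m '' X).ncard :=
        ncard_image_le_ncard_image_of_fiberwise (fun x hx y hy hxy => window_eq_window_iff.2
          (h x hx y hy (window_eq_window_iff.1 hxy))) (toFinite _)

lemma finite_of_complexity_le [Finite A] (hX : shift '' X = X) {C : ℕ}
    (h : ∀ m, complexity X m ≤ C) :
    X.Finite := by
  by_contra hinf
  obtain ⟨S, hSX, hcard⟩ := Set.Infinite.exists_subset_card_eq hinf (C + 1)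
  have hsep : ∀ x ∈ S, ∀ y ∈ S,
      ∀ᶠ N : ℕ in atTop, window (-N) (2 * N) x = window (-N) (2 * N) y → x = y := by
    intro x _ y _
    by_cases hxy : x = y
    · exact Eventually.of_forall fun _ _ => hxy
    obtain ⟨i, hi⟩ := ne_iff.1 hxy
    filter_upwards [eventually_ge_atTop (i.natAbs + 1)] with N hN hw
    exact absurd (window_eq_window_iff.1 hw i ⟨by omega, by omega⟩) hi
  obtain ⟨N, hN⟩ := ((eventually_all_finset S).2 fun x hx =>
    (eventually_all_finset S).2 (hsep x hx)).exists
  have hinj : InjOn (window (-N) (2 * N)) S := fun x hx y hy => hN x hx y hy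
  have key : C + 1 ≤ C := calc
    C + 1 = (window (-N) (2 * N) '' S).ncard := by
          rw [hinj.ncard_image, ncard_coe_finset, hcard]
      _ ≤ (window (-N) (2 * N) '' X).ncard := ncard_le_ncard (image_mono hSX) (toFinite _)
      _ = complexity X (2 * N) := ncard_image_window hX _ _
      _ ≤ C := h _
  omega

end Complexity

theorem finite_of_codes_ici {A : Type*} [Finite A] [TopologicalSpace A] [DiscreteTopology A]
    {X : Set (ℤ → A)} {ψ : (ℤ → A) → ℤ → A} (hX : IsSubshift X) (hψs : SurjOn ψ X X)
    (hψc : ContinuousOn ψ X) {R W : ℤ} (hR : ∀ a b, Codes X ψ (Icc (a - R) (b + R)) (Icc a b))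
    (hW : W + R < 0) (h : Codes X ψ (Ici 0) (Ici W)) : X.Finite := by
  obtain ⟨F, hF0, hF⟩ :=
    (h.mono subset_rfl Ico_subset_Ici_self).exists_finset hX.1 hψc (finite_Ico W R)
  obtain ⟨N, hN⟩ := F.bddAbove
  have hwindow : ∀ m : ℕ, N < m → Codes X ψ (Ico 0 m) (Ico W (m - R)) := by
    intro m hm
    have hleft : Codes X ψ (Ico 0 m) (Ico W R) :=
      hF.mono (fun i hi => mem_Ico.2 ⟨hF0 hi, (hN hi).trans_lt hm⟩) subset_rfl
    have hright : Codes X ψ (Ico 0 m) (Ico R (m - R)) :=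
      (hR R (m - R - 1)).mono (fun i hi => mem_Ico.2 ⟨by linarith [hi.1], by linarith [hi.2]⟩)
        (fun i hi => mem_Icc.2 ⟨hi.1, Int.le_sub_one_of_lt hi.2⟩)
    exact (hleft.union hright).mono subset_rfl Ico_subset_Ico_union_Ico
  -- `[0, m)` codes a window of length `m + g` with `g = -W - R ≥ 1`, so complexity stops growing
  have hstep : ∀ m : ℕ, N < m → complexity X (m + 1) ≤ complexity X m := by
    intro m hm
    have hlen : W + ((m + (-W - R).toNat : ℕ) : ℤ) = m - R := by push_cast; omega
    refine (complexity_mono (show m + 1 ≤ m + (-W - R).toNat by omega)).trans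
      (complexity_le_of_codes hX.2 hψs (a := 0) (b := W) ?_)
    rw [zero_add, hlen]
    exact hwindow m hm
  refine finite_of_complexity_le hX.2 (C := complexity X (N.toNat + 1)) fun m => ?_
  rcases le_total m (N.toNat + 1) with hm | hm
  · exact complexity_mono hm
  · induction m, hm using Nat.le_induction with
    | base => exact le_rfl
    | succ m hm ih => exact (hstep m (by omega)).trans ih

lemma exists_tendsto_div_of_subadditive {u : ℕ → ℤ} (hu : ∀ m n, u (m + n) ≤ u m + u n)
    {C : ℝ} (hC : ∀ n : ℕ, -(C * n) ≤ u n) :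
    ∃ α : ℝ, Tendsto (fun n => (u n : ℝ) / n) atTop (𝓝 α) := by
  have hsub : Subadditive (fun n => (u n : ℝ)) := fun m n => by dsimp only; exact_mod_cast hu m n
  refine ⟨hsub.lim, hsub.tendsto_lim ⟨min (-C) 0, ?_⟩⟩
  rintro _ ⟨n, rfl⟩
  rcases n.eq_zero_or_pos with rfl | hn
  · simp
  · rw [le_div_iff₀ (by exact_mod_cast hn)]
    nlinarith [min_le_left (-C) 0, hC n, (Nat.cast_pos (α := ℝ)).2 hn]

section Wplus

variable {A : Type*} [Finite A] [TopologicalSpace A] [DiscreteTopology A] {X : Set (ℤ → A)}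
  {φ : (ℤ → A) → ℤ → A}

lemma neg_mul_le_of_mem_wplusSet (hX : IsSubshift X) (hinf : X.Infinite) (hφ : IsEndo X φ)
    {R : ℤ} (hR : Codes X φ (Icc (-R) R) {0}) {n : ℕ} {W : ℤ} (hW : W ∈ WplusSet X φ n) :
    -(R * n) ≤ W := by
  by_contra! hlt
  exact hinf (finite_of_codes_ici hX (hφ.iterate n).surj (hφ.iterate n).cont
    ((hφ.codes_iterate_radius hX.2 hR n).icc_of_radius hX.2 (hφ.iterate n).comm)
    (by linarith) hW)

theorem abs_wplus_le_and_exists_tendsto (hX : IsSubshift X) (hinf : X.Infinite)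
    (hφ : IsEndo X φ) {Wp : ℕ → ℤ} (hWp : ∀ n, IsLeast (WplusSet X φ n) (Wp n)) {D : ℕ}
    (hD : Codes X φ (Icc (-(D : ℤ)) D) {0}) :
    (∀ n : ℕ, |Wp n| ≤ (D : ℤ) * n) ∧
      ∃ α : ℝ, Tendsto (fun n : ℕ => (Wp n : ℝ) / n) atTop (𝓝 α) := by
  have habs : ∀ n : ℕ, |Wp n| ≤ (D : ℤ) * n := fun n =>
    abs_le.2 ⟨neg_mul_le_of_mem_wplusSet hX hinf hφ hD (hWp n).1,
      (hWp n).2 (mul_mem_wplusSet hX.2 hφ hD n)⟩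
  refine ⟨habs, exists_tendsto_div_of_subadditive
    (fun m n => (hWp (m + n)).2 (add_mem_wplusSet hX.2 hφ (hWp m).1 (hWp n).1)) (C := D)
    fun n => ?_⟩
  exact_mod_cast (abs_le.1 (habs n)).1

end Wplus

section Mirror

variable {A : Type*} {X : Set (ℤ → A)} {ψ φ : (ℤ → A) → ℤ → A} {S T : Set ℤ}

def mirror (x : ℤ → A) : ℤ → A := fun n => x (-n)

lemma mirror_involutive : Involutive (mirror : (ℤ → A) → ℤ → A) := fun x => by
  funext n; simp [mirror]

lemma shift_mirror (x : ℤ → A) : shift (mirror x) = mirror (zshift (-1) x) := by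
  funext n
  simp only [shift, mirror, zshift]
  ring_nf

lemma semiconj_mirror : Semiconj mirror φ (mirror ∘ φ ∘ mirror) := fun x => by
  simp [mirror_involutive x]

lemma iterate_mirror_conj (n : ℕ) : (mirror ∘ φ ∘ mirror)^[n] = mirror ∘ φ^[n] ∘ mirror := by
  funext x
  simpa [mirror_involutive x] using ((semiconj_mirror (φ := φ)).iterate_right n (mirror x)).symm

lemma codes_mirror_iff : Codes (mirror '' X) (mirror ∘ ψ ∘ mirror) (-S) (-T) ↔ Codes X ψ S T := by
  constructor
  · intro h x hx y hy hxy j hj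
    simpa [mirror, mirror_involutive _] using h _ (mem_image_of_mem _ hx) _ (mem_image_of_mem _ hy)
      (fun i hi => hxy (-i) hi) (-j) (by simpa using hj)
  · rintro h _ ⟨x, hx, rfl⟩ _ ⟨y, hy, rfl⟩ hxy j hj
    simpa [mirror, mirror_involutive _] using
      h x hx y hy (fun i hi => by simpa [mirror] using hxy (-i) (by simpa using hi)) (-j) hj

lemma mem_wplusSet_mirror_iff {W : ℤ} {n : ℕ} :
    W ∈ WplusSet (mirror '' X) (mirror ∘ φ ∘ mirror) n ↔ -W ∈ WminusSet X φ n := by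
  rw [WplusSet, WminusSet, mem_ofPred_eq, mem_ofPred_eq, iterate_mirror_conj,
    ← codes_mirror_iff (X := X), neg_Iic, neg_Iic, neg_zero, neg_neg]

variable [TopologicalSpace A]

lemma continuous_mirror : Continuous (mirror : (ℤ → A) → ℤ → A) :=
  continuous_pi fun n => continuous_apply (-n)

lemma IsSubshift.image_mirror (hX : IsSubshift X) : IsSubshift (mirror '' X) := by
  refine ⟨?_, ?_⟩
  · rw [image_eq_preimage_of_inverse mirror_involutive.leftInverse mirror_involutive.rightInverse]
    exact hX.1.preimage continuous_mirror
  · rw [image_image]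
    simp only [shift_mirror]
    rw [← image_image mirror (zshift (-1)), image_zshift_eq hX.2]

lemma IsEndo.conj_mirror (hX : shift '' X = X) (hφ : IsEndo X φ) :
    IsEndo (mirror '' X) (mirror ∘ φ ∘ mirror) where
  maps := semiconj_mirror.mapsTo_image hφ.maps
  surj := semiconj_mirror.surjOn_image hφ.surj
  cont := continuous_mirror.comp_continuousOn (hφ.cont.comp continuous_mirror.continuousOn
    (by rintro _ ⟨x, hx, rfl⟩; rwa [mirror_involutive]))
  comm := by
    rintro _ ⟨x, hx, rfl⟩
    simp only [comp_apply, mirror_involutive x, shift_mirror]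
    rw [mirror_involutive, map_zshift hX hφ.comm (-1) hx]

end Mirror

/-- The limits `α⁺(φ) = lim W⁺(n,φ)/n` and `α⁻(φ) = lim W⁻(n,φ)/n` exist and are finite;
moreover if `D` is at least the range of the block code of `φ` then `|W±(n)| ≤ D·n`. -/
theorem alpha_exists {A : Type*} [Fintype A] [TopologicalSpace A]
    [DiscreteTopology A] (X : Set (ℤ → A)) (hX : IsSubshift X) (hinf : X.Infinite)
    (φ : (ℤ → A) → (ℤ → A)) (hφ : IsEndo X φ)
    (Wp Wm : ℕ → ℤ)
    (hWp : ∀ n, IsLeast (WplusSet X φ n) (Wp n))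
    (hWm : ∀ n, IsGreatest (WminusSet X φ n) (Wm n))
    (D : ℕ) (hD : Codes X φ (Set.Icc (-(D : ℤ)) (D : ℤ)) {0}) :
    (∀ n : ℕ, |Wp n| ≤ (D : ℤ) * n ∧ |Wm n| ≤ (D : ℤ) * n) ∧
    (∃ αp : ℝ, Tendsto (fun n : ℕ => (Wp n : ℝ) / n) atTop (𝓝 αp)) ∧
    (∃ αm : ℝ, Tendsto (fun n : ℕ => (Wm n : ℝ) / n) atTop (𝓝 αm)) := by
  have hWm' : ∀ n, IsLeast (WplusSet (mirror '' X) (mirror ∘ φ ∘ mirror) n) (-Wm n) := fun n =>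
    ⟨mem_wplusSet_mirror_iff.2 (by simpa using (hWm n).1),
      fun W hW => neg_le.2 ((hWm n).2 (mem_wplusSet_mirror_iff.1 hW))⟩
  have hD' : Codes (mirror '' X) (mirror ∘ φ ∘ mirror) (Icc (-(D : ℤ)) D) {0} := by
    simpa using codes_mirror_iff.2 hD
  obtain ⟨hp, αp, hαp⟩ := abs_wplus_le_and_exists_tendsto hX hinf hφ hWp hD
  obtain ⟨hm, αm, hαm⟩ := abs_wplus_le_and_exists_tendsto hX.image_mirror
    (hinf.image mirror_involutive.injective.injOn) (hφ.conj_mirror hX.2) hWm' hD'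
  refine ⟨fun n => ⟨hp n, by simpa using hm n⟩, ⟨αp, hαp⟩, ⟨-αm, ?_⟩⟩
  simpa [neg_div] using hαm.neg
end

section
/- For an endomorphism φ of an infinite subshift and any m ∈ ℕ: α^+(φ^m) = m·α^+(φ) and α^-(φ^m) = m·α^-(φ). -/
/-! Since `(φ^[m])^[n] = φ^[m * n]`, the coding boundaries of `φ^[m]` at time `n` are those of
`φ` at time `m * n`, and `W (m * n) / n = m * (W (m * n) / (m * n))`. -/

open Filter Topology

theorem tendsto_comp_mul_div_natCast {u : ℕ → ℝ} {a : ℝ} (m : ℕ)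
    (h : Tendsto (fun n : ℕ => u n / n) atTop (𝓝 a)) :
    Tendsto (fun n : ℕ => u (m * n) / n) atTop (𝓝 (m * a)) := by
  rcases Nat.eq_zero_or_pos m with rfl | hm
  · simpa using tendsto_const_nhds.div_atTop tendsto_natCast_atTop_atTop
  have hmul : Tendsto (fun n : ℕ => m * n) atTop atTop :=
    tendsto_id.const_mul_atTop' hm
  refine ((h.comp hmul).const_mul (m : ℝ)).congr' ?_
  filter_upwards [eventually_gt_atTop 0] with n hn
  have : (m : ℝ) ≠ 0 := by positivity
  simp only [Function.comp_apply, Nat.cast_mul]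
  field_simp

theorem WplusSet_iterate {A : Type*} (X : Set (ℤ → A)) (φ : (ℤ → A) → (ℤ → A)) (m n : ℕ) :
    WplusSet X (φ^[m]) n = WplusSet X φ (m * n) := by
  rw [WplusSet, WplusSet, ← Function.iterate_mul]

theorem WminusSet_iterate {A : Type*} (X : Set (ℤ → A)) (φ : (ℤ → A) → (ℤ → A)) (m n : ℕ) :
    WminusSet X (φ^[m]) n = WminusSet X φ (m * n) := by
  rw [WminusSet, WminusSet, ← Function.iterate_mul]

theorem alpha_pow_general {A : Type*} (X : Set (ℤ → A))
    (φ : (ℤ → A) → (ℤ → A)) (m : ℕ)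
    (Wp Wm Wp' Wm' : ℕ → ℤ)
    (hWp : ∀ n, IsLeast (WplusSet X φ n) (Wp n))
    (hWm : ∀ n, IsGreatest (WminusSet X φ n) (Wm n))
    (hWp' : ∀ n, IsLeast (WplusSet X (φ^[m]) n) (Wp' n))
    (hWm' : ∀ n, IsGreatest (WminusSet X (φ^[m]) n) (Wm' n))
    (αp αm αp' αm' : ℝ)
    (hαp : Tendsto (fun n : ℕ => (Wp n : ℝ) / n) atTop (𝓝 αp))
    (hαm : Tendsto (fun n : ℕ => (Wm n : ℝ) / n) atTop (𝓝 αm))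
    (hαp' : Tendsto (fun n : ℕ => (Wp' n : ℝ) / n) atTop (𝓝 αp'))
    (hαm' : Tendsto (fun n : ℕ => (Wm' n : ℝ) / n) atTop (𝓝 αm')) :
    αp' = (m : ℝ) * αp ∧ αm' = (m : ℝ) * αm := by
  have hp : Wp' = fun n => Wp (m * n) :=
    funext fun n => (hWp' n).unique (WplusSet_iterate X φ m n ▸ hWp (m * n))
  have hm : Wm' = fun n => Wm (m * n) :=
    funext fun n => (hWm' n).unique (WminusSet_iterate X φ m n ▸ hWm (m * n))
  subst hp hm
  exact ⟨tendsto_nhds_unique hαp' (tendsto_comp_mul_div_natCast m hαp),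
    tendsto_nhds_unique hαm' (tendsto_comp_mul_div_natCast m hαm)⟩

/-- For any `m ∈ ℕ`: `α⁺(φᵐ) = m·α⁺(φ)` and `α⁻(φᵐ) = m·α⁻(φ)`. -/
theorem alpha_pow {A : Type*} [Fintype A] [TopologicalSpace A]
    [DiscreteTopology A] (X : Set (ℤ → A)) (hX : IsSubshift X) (hinf : X.Infinite)
    (φ : (ℤ → A) → (ℤ → A)) (hφ : IsEndo X φ) (m : ℕ)
    (Wp Wm Wp' Wm' : ℕ → ℤ)
    (hWp : ∀ n, IsLeast (WplusSet X φ n) (Wp n))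
    (hWm : ∀ n, IsGreatest (WminusSet X φ n) (Wm n))
    (hWp' : ∀ n, IsLeast (WplusSet X (φ^[m]) n) (Wp' n))
    (hWm' : ∀ n, IsGreatest (WminusSet X (φ^[m]) n) (Wm' n))
    (αp αm αp' αm' : ℝ)
    (hαp : Tendsto (fun n : ℕ => (Wp n : ℝ) / n) atTop (𝓝 αp))
    (hαm : Tendsto (fun n : ℕ => (Wm n : ℝ) / n) atTop (𝓝 αm))
    (hαp' : Tendsto (fun n : ℕ => (Wp' n : ℝ) / n) atTop (𝓝 αp'))
    (hαm' : Tendsto (fun n : ℕ => (Wm' n : ℝ) / n) atTop (𝓝 αm')) :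
    αp' = (m : ℝ) * αp ∧ αm' = (m : ℝ) * αm :=
  alpha_pow_general X φ m Wp Wm Wp' Wm' hWp hWm hWp' hWm' αp αm αp' αm' hαp hαm hαp' hαm'
end

section
/- For any rational numbers r₁ ≤ r₂, there exist a full shift (X, σ) over some finite alphabet and an automorphism φ of (X, σ) with α^-(φ) = r₁ and α^+(φ) = r₂. -/
open Filter Topology

/-!
Index the alphabet by `κ × Fin q`: each `k : κ` owns a block of `q` layers. The automorphism moves
every layer of block `k` one step down and puts layer `0`, displaced by `p k`, on top. Its `n`-th
power is again a map in which every cell copies a single cell, namely layer `(j + n) % q` displaced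
by `p k * ⌊(j + n) / q⌋`. For such maps the coding sets are exact: `[0, ∞)` codes `[W, ∞)` iff every
cell read from `[W, ∞)` lies in `[0, ∞)`. So `W⁺(n)` and `W⁻(n)` are the largest and smallest of
the displacements `p k * ⌊(j + n) / q⌋`, each within `|p k|` of `(p k / q) * n`; choosing a common
denominator `q` and `p k / q ∈ {r₁, r₂}` gives the slopes.
-/

open Set

section Relabel

variable {A A' : Type*}

def relabel (e : A ≃ A') (φ : (ℤ → A) → ℤ → A) : (ℤ → A') → ℤ → A' :=
  ((Equiv.refl ℤ).arrowCongr e).conj φ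

lemma relabel_apply (e : A ≃ A') (φ : (ℤ → A) → ℤ → A) (y : ℤ → A') :
    relabel e φ y = e ∘ φ (e.symm ∘ y) := rfl

lemma relabel_iterate (e : A ≃ A') (φ : (ℤ → A) → ℤ → A) (n : ℕ) :
    (relabel e φ)^[n] = relabel e (φ^[n]) := by
  induction n with
  | zero => funext y; simp [relabel_apply, ← Function.comp_assoc]
  | succ n ih =>
    rw [Function.iterate_succ, ih, Function.iterate_succ, relabel, relabel, relabel, Equiv.conj_comp]

lemma relabel_bijective (e : A ≃ A') {φ : (ℤ → A) → ℤ → A} (hφ : Function.Bijective φ) :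
    Function.Bijective (relabel e φ) :=
  let E := (Equiv.refl ℤ).arrowCongr e
  E.bijective.comp (hφ.comp E.symm.bijective)

lemma relabel_shift (e : A ≃ A') {φ : (ℤ → A) → ℤ → A} (hφ : ∀ x, φ (shift x) = shift (φ x))
    (y : ℤ → A') : relabel e φ (shift y) = shift (relabel e φ y) := by
  rw [relabel_apply, relabel_apply, show e.symm ∘ shift y = shift (e.symm ∘ y) from rfl, hφ]
  rfl

lemma codes_relabel_iff (e : A ≃ A') (φ : (ℤ → A) → ℤ → A) (S T : Set ℤ) :
    Codes univ (relabel e φ) S T ↔ Codes univ φ S T := by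
  constructor
  · intro h x _ y _ hxy j hj
    have := h (e ∘ x) trivial (e ∘ y) trivial (fun i hi => by simp [hxy i hi]) j hj
    simpa [relabel_apply, Function.comp_def] using this
  · intro h x _ y _ hxy j hj
    simp only [relabel_apply, Function.comp_apply]
    rw [h (e.symm ∘ x) trivial (e.symm ∘ y) trivial (fun i hi => by simp [hxy i hi]) j hj]

lemma wplusSet_relabel (e : A ≃ A') (φ : (ℤ → A) → ℤ → A) (n : ℕ) :
    WplusSet univ (relabel e φ) n = WplusSet univ φ n := by
  simp only [WplusSet, relabel_iterate, codes_relabel_iff]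

lemma wminusSet_relabel (e : A ≃ A') (φ : (ℤ → A) → ℤ → A) (n : ℕ) :
    WminusSet univ (relabel e φ) n = WminusSet univ φ n := by
  simp only [WminusSet, relabel_iterate, codes_relabel_iff]

end Relabel

section Rewire

variable {ι B : Type*}

def rewire (s : ι → ℤ) (π : ι → ι) (x : ℤ → ι → B) : ℤ → ι → B :=
  fun m j => x (m + s j) (π j)

lemma rewire_shift (s : ι → ℤ) (π : ι → ι) (x : ℤ → ι → B) :
    rewire s π (shift x) = shift (rewire s π x) := by
  funext m j
  simp only [rewire, shift, add_right_comm]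

lemma rewire_rewire (s s' : ι → ℤ) (π π' : ι → ι) (x : ℤ → ι → B) :
    rewire s π (rewire s' π' x) = rewire (fun j => s j + s' (π j)) (π' ∘ π) x := by
  funext m j
  simp only [rewire, Function.comp_apply, add_assoc]

lemma rewire_zero_id (x : ℤ → ι → B) : rewire 0 id x = x := by
  funext m j
  simp [rewire]

lemma rewire_bijective (s : ι → ℤ) {π : ι → ι} (hπ : Function.Bijective π) :
    Function.Bijective (rewire (B := B) s π) := by
  set e := Equiv.ofBijective π hπ
  rw [Function.bijective_iff_has_inverse]
  refine ⟨rewire (fun j => -s (e.symm j)) e.symm, fun x => ?_, fun x => ?_⟩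
  · rw [rewire_rewire]
    convert rewire_zero_id x using 2
    · funext j
      simp
    · exact funext e.apply_symm_apply
  · rw [rewire_rewire]
    convert rewire_zero_id x using 2
    · funext j
      simp [e]
    · exact funext e.symm_apply_apply

lemma codes_rewire_of_forall (s : ι → ℤ) (π : ι → ι) {S T : Set ℤ}
    (h : ∀ m ∈ T, ∀ j, m + s j ∈ S) : Codes univ (rewire (B := B) s π) S T :=
  fun _ _ _ _ hxy m hm => funext fun j => congrFun (hxy _ (h m hm j)) _

lemma codes_rewire_iff [Nontrivial B] (s : ι → ℤ) (π : ι → ι) (S T : Set ℤ) :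
    Codes univ (rewire (B := B) s π) S T ↔ ∀ m ∈ T, ∀ j, m + s j ∈ S := by
  refine ⟨fun h m hm j => ?_, codes_rewire_of_forall s π⟩
  classical
  obtain ⟨b, b', hb⟩ := exists_pair_ne B
  by_contra hS
  have := congrFun (h (fun _ _ => b) trivial (fun k _ => if k ∈ S then b else b') trivial
    (fun i hi => by simp [hi]) m hm) j
  simp [rewire, hS, hb] at this

lemma exists_codes_rewire_Icc [Finite ι] (s : ι → ℤ) (π : ι → ι) :
    ∃ R : ℕ, Codes univ (rewire (B := B) s π) (Icc (-(R : ℤ)) R) {0} := by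
  obtain ⟨R, hR⟩ := (finite_range fun j => (s j).natAbs).bddAbove
  refine ⟨R, codes_rewire_of_forall s π ?_⟩
  rintro m rfl j
  have := hR (mem_range_self j)
  simp only [zero_add, mem_Icc]
  omega

lemma codes_rewire_Ici_iff [Nontrivial B] (s : ι → ℤ) (π : ι → ι) (W : ℤ) :
    Codes univ (rewire (B := B) s π) (Ici 0) (Ici W) ↔ W ∈ upperBounds (range (-s)) := by
  simp only [codes_rewire_iff, mem_Ici, mem_upperBounds, forall_mem_range, Pi.neg_apply]
  exact ⟨fun h j => by linarith [h W le_rfl j], fun h m hm j => by linarith [h j]⟩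

lemma codes_rewire_Iic_iff [Nontrivial B] (s : ι → ℤ) (π : ι → ι) (W : ℤ) :
    Codes univ (rewire (B := B) s π) (Iic 0) (Iic W) ↔ W ∈ lowerBounds (range (-s)) := by
  simp only [codes_rewire_iff, mem_Iic, mem_lowerBounds, forall_mem_range, Pi.neg_apply]
  exact ⟨fun h j => by linarith [h W le_rfl j], fun h m hm j => by linarith [h j]⟩

end Rewire

section Asymptotics

variable {ι : Type*}

lemma tendsto_div_of_abs_sub_mul_le (u : ℕ → ℝ) (L C : ℝ) (h : ∀ n : ℕ, |u n - L * n| ≤ C) :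
    Tendsto (fun n : ℕ => u n / n) atTop (𝓝 L) := by
  have hdiff : Tendsto (fun n : ℕ => u n / n - L) atTop (𝓝 0) := by
    refine squeeze_zero_norm' ?_ (tendsto_const_div_atTop_nhds_zero_nat C)
    filter_upwards [eventually_gt_atTop 0] with n hn
    have hn' : (0 : ℝ) < n := Nat.cast_pos.mpr hn
    rw [Real.norm_eq_abs, show u n / n - L = (u n - L * n) / n by field_simp, abs_div,
      abs_of_pos hn']
    gcongr
    exact h n
  simpa using hdiff.add_const L

lemma abs_sub_le_of_isGreatest_range {t g : ι → ℝ} {W V C : ℝ} (ht : IsGreatest (range t) W)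
    (hg : IsGreatest (range g) V) (h : ∀ i, |t i - g i| ≤ C) : |W - V| ≤ C := by
  obtain ⟨⟨i, rfl⟩, hti⟩ := ht
  obtain ⟨⟨k, rfl⟩, hgk⟩ := hg
  have h₁ := hgk (mem_range_self i)
  have h₂ := hti (mem_range_self k)
  rw [abs_sub_le_iff]
  constructor <;> linarith [abs_sub_le_iff.mp (h i), abs_sub_le_iff.mp (h k)]

lemma exists_isGreatest_range_tendsto_div [Finite ι] [Nonempty ι] (t : ℕ → ι → ℤ) (c : ι → ℝ)
    {L C : ℝ} (hL : IsGreatest (range c) L) (ht : ∀ n i, |(t n i : ℝ) - c i * n| ≤ C) :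
    ∃ W : ℕ → ℤ, (∀ n, IsGreatest (range (t n)) (W n)) ∧
      Tendsto (fun n : ℕ => (W n : ℝ) / n) atTop (𝓝 L) := by
  have hmax : ∀ n, ∃ w, IsGreatest (range (t n)) w := fun n =>
    let ⟨i, hi⟩ := Finite.exists_max (t n)
    ⟨t n i, mem_range_self i, forall_mem_range.mpr hi⟩
  choose W hW using hmax
  refine ⟨W, hW, tendsto_div_of_abs_sub_mul_le _ L C fun n => ?_⟩
  have hWn : IsGreatest (range fun i => (t n i : ℝ)) (W n) := by
    simpa only [range_comp'] using Int.cast_mono.map_isGreatest (hW n)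
  have hLn : IsGreatest (range fun i => c i * n) (L * n) := by
    rw [show (fun i => c i * n) = (· * (n : ℝ)) ∘ c from rfl, range_comp]
    exact (monotone_mul_right_of_nonneg (Nat.cast_nonneg n)).map_isGreatest hL
  exact abs_sub_le_of_isGreatest_range hWn hLn (ht n)

lemma exists_isLeast_range_tendsto_div [Finite ι] [Nonempty ι] (t : ℕ → ι → ℤ) (c : ι → ℝ)
    {L C : ℝ} (hL : IsLeast (range c) L) (ht : ∀ n i, |(t n i : ℝ) - c i * n| ≤ C) :
    ∃ W : ℕ → ℤ, (∀ n, IsLeast (range (t n)) (W n)) ∧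
      Tendsto (fun n : ℕ => (W n : ℝ) / n) atTop (𝓝 L) := by
  have hL' : IsGreatest (range (-c)) (-L) := by
    rw [show -c = Neg.neg ∘ c from rfl, range_comp]
    exact Antitone.map_isLeast (fun _ _ => neg_le_neg) hL
  obtain ⟨W, hW, hlim⟩ := exists_isGreatest_range_tendsto_div (-t) (-c) hL' fun n i => by
    rw [← abs_neg]
    convert ht n i using 2
    simp only [Pi.neg_apply, Int.cast_neg]
    ring
  refine ⟨-W, fun n => ?_, by simpa [neg_div] using hlim.neg⟩
  rw [show t n = Neg.neg ∘ (-t) n from by simp [Function.comp_def], range_comp]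
  exact Antitone.map_isGreatest (fun _ _ => neg_le_neg) (hW n)

end Asymptotics

lemma Nat.div_add_mod_add_div (a m : ℕ) {q : ℕ} (hq : 0 < q) :
    a / q + (a % q + m) / q = (a + m) / q := by
  conv_rhs => rw [← Nat.mod_add_div a q, add_right_comm, Nat.add_mul_div_left _ _ hq]
  ring

section Layers

variable {κ B : Type*}

def layerOffset (q : ℕ) (p : κ → ℤ) (n : ℕ) (i : κ × Fin q) : ℤ :=
  -(p i.1 * (((i.2 : ℕ) + n) / q : ℕ))

def layerIndex (q n : ℕ) (i : κ × Fin q) : κ × Fin q :=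
  (i.1, ⟨((i.2 : ℕ) + n) % q, Nat.mod_lt _ i.2.pos⟩)

def rotateLayers (q : ℕ) (p : κ → ℤ) : (ℤ → κ × Fin q → B) → ℤ → κ × Fin q → B :=
  rewire (layerOffset q p 1) (layerIndex q 1)

variable {q : ℕ}

lemma layerIndex_layerIndex (n m : ℕ) (i : κ × Fin q) :
    layerIndex q m (layerIndex q n i) = layerIndex q (n + m) i := by
  simp only [layerIndex, Prod.mk.injEq, Fin.mk.injEq, true_and]
  rw [Nat.mod_add_mod, add_assoc]

lemma layerIndex_zero : layerIndex (κ := κ) q 0 = id := by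
  funext i
  simp [layerIndex, Nat.mod_eq_of_lt i.2.isLt]

lemma layerIndex_self (i : κ × Fin q) : layerIndex q q i = i := by
  simp [layerIndex, Nat.mod_eq_of_lt i.2.isLt]

lemma layerOffset_add (p : κ → ℤ) (n m : ℕ) (i : κ × Fin q) :
    layerOffset q p n i + layerOffset q p m (layerIndex q n i) = layerOffset q p (n + m) i := by
  simp only [layerOffset, layerIndex]
  rw [← add_assoc, ← Nat.div_add_mod_add_div ((i.2 : ℕ) + n) m i.2.pos]
  push_cast
  ring

lemma layerOffset_zero (p : κ → ℤ) : layerOffset q p 0 = 0 := by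
  funext i
  simp [layerOffset, Nat.div_eq_of_lt i.2.isLt]

lemma rotateLayers_iterate (p : κ → ℤ) (n : ℕ) :
    (rotateLayers (B := B) q p)^[n] = rewire (layerOffset q p n) (layerIndex q n) := by
  induction n with
  | zero =>
    funext x
    rw [layerOffset_zero, layerIndex_zero, rewire_zero_id, Function.iterate_zero_apply]
  | succ n ih =>
    funext x
    rw [Function.iterate_succ_apply', ih, rotateLayers, rewire_rewire, add_comm n]
    congr 1
    · exact funext (layerOffset_add p 1 n)
    · exact funext (layerIndex_layerIndex 1 n)

lemma layerIndex_one_bijective : Function.Bijective (layerIndex (κ := κ) q 1) := by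
  rw [Function.bijective_iff_has_inverse]
  refine ⟨layerIndex q (q - 1), fun i => ?_, fun i => ?_⟩
  · rw [layerIndex_layerIndex, Nat.add_sub_cancel' i.2.pos, layerIndex_self]
  · rw [layerIndex_layerIndex, Nat.sub_add_cancel i.2.pos, layerIndex_self]

lemma rotateLayers_bijective (p : κ → ℤ) : Function.Bijective (rotateLayers (B := B) q p) :=
  rewire_bijective _ layerIndex_one_bijective

lemma wplusSet_rotateLayers [Nontrivial B] (p : κ → ℤ) (n : ℕ) :
    WplusSet univ (rotateLayers (B := B) q p) n = upperBounds (range (-layerOffset q p n)) := by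
  ext W
  rw [WplusSet, mem_ofPred_eq, rotateLayers_iterate, codes_rewire_Ici_iff]

lemma wminusSet_rotateLayers [Nontrivial B] (p : κ → ℤ) (n : ℕ) :
    WminusSet univ (rotateLayers (B := B) q p) n = lowerBounds (range (-layerOffset q p n)) := by
  ext W
  rw [WminusSet, mem_ofPred_eq, rotateLayers_iterate, codes_rewire_Iic_iff]

lemma abs_neg_layerOffset_sub_le {p : κ → ℤ} {r : κ → ℝ} (hp : ∀ k, (p k : ℝ) = r k * q)
    (n : ℕ) (i : κ × Fin q) : |((-layerOffset q p n i : ℤ) : ℝ) - r i.1 * n| ≤ |r i.1| * q := by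
  set d := ((i.2 : ℕ) + n) / q with hd_def
  have hd : |(q : ℝ) * d - n| ≤ q := by
    have h₁ : q * d + ((i.2 : ℕ) + n) % q = i.2 + n := Nat.div_add_mod _ _
    have h₂ := Nat.mod_lt ((i.2 : ℕ) + n) i.2.pos
    have h₃ : ((q * d : ℕ) : ℝ) ≤ n + q := by exact_mod_cast (by omega : q * d ≤ n + q)
    have h₄ : (n : ℝ) ≤ (q * d : ℕ) + q := by exact_mod_cast (by omega : n ≤ q * d + q)
    push_cast at h₃ h₄
    rw [abs_le]
    constructor <;> linarith
  have hoff : ((-layerOffset q p n i : ℤ) : ℝ) = r i.1 * (q * d) := by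
    simp only [layerOffset, neg_neg, Int.cast_mul, hp, Int.cast_natCast, ← hd_def]
    ring
  rw [hoff, ← mul_sub, abs_mul]
  exact mul_le_mul_of_nonneg_left hd (abs_nonneg _)

lemma exists_abs_neg_layerOffset_sub_le [Finite κ] {p : κ → ℤ} {r : κ → ℝ}
    (hp : ∀ k, (p k : ℝ) = r k * q) :
    ∃ C : ℝ, ∀ n i, |((-layerOffset q p n i : ℤ) : ℝ) - r i.1 * n| ≤ C := by
  obtain ⟨C, hC⟩ := (finite_range fun k => |r k|).bddAbove
  exact ⟨C * q, fun n i => (abs_neg_layerOffset_sub_le hp n i).trans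
    (mul_le_mul_of_nonneg_right (hC (mem_range_self i.1)) (Nat.cast_nonneg q))⟩

end Layers

section Slopes

variable {κ B : Type*} [Finite κ] [Nonempty κ] [Nontrivial B] {q : ℕ} {p : κ → ℤ} {r : κ → ℝ}

theorem exists_isLeast_wplusSet_rotateLayers (hq : 0 < q) (hp : ∀ k, (p k : ℝ) = r k * q)
    {L : ℝ} (hL : IsGreatest (range r) L) :
    ∃ W : ℕ → ℤ, (∀ n, IsLeast (WplusSet univ (rotateLayers (B := B) q p) n) (W n)) ∧
      Tendsto (fun n : ℕ => (W n : ℝ) / n) atTop (𝓝 L) := by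
  have : Nonempty (Fin q) := ⟨⟨0, hq⟩⟩
  obtain ⟨C, hC⟩ := exists_abs_neg_layerOffset_sub_le hp
  obtain ⟨W, hW, hlim⟩ := exists_isGreatest_range_tendsto_div (fun n => -layerOffset q p n)
    (fun i => r i.1) ((Prod.fst_surjective (β := Fin q)).range_comp r ▸ hL) hC
  exact ⟨W, fun n => wplusSet_rotateLayers (B := B) p n ▸ (hW n).isLUB, hlim⟩

theorem exists_isGreatest_wminusSet_rotateLayers (hq : 0 < q) (hp : ∀ k, (p k : ℝ) = r k * q)
    {L : ℝ} (hL : IsLeast (range r) L) :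
    ∃ W : ℕ → ℤ, (∀ n, IsGreatest (WminusSet univ (rotateLayers (B := B) q p) n) (W n)) ∧
      Tendsto (fun n : ℕ => (W n : ℝ) / n) atTop (𝓝 L) := by
  have : Nonempty (Fin q) := ⟨⟨0, hq⟩⟩
  obtain ⟨C, hC⟩ := exists_abs_neg_layerOffset_sub_le hp
  obtain ⟨W, hW, hlim⟩ := exists_isLeast_range_tendsto_div (fun n => -layerOffset q p n)
    (fun i => r i.1) ((Prod.fst_surjective (β := Fin q)).range_comp r ▸ hL) hC
  exact ⟨W, fun n => wminusSet_rotateLayers (B := B) p n ▸ (hW n).isGLB, hlim⟩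

end Slopes

lemma exists_common_denominator {κ : Type*} [Finite κ] (r : κ → ℚ) :
    ∃ q : ℕ, 0 < q ∧ ∃ p : κ → ℤ, ∀ k, r k * q = p k := by
  classical
  cases nonempty_fintype κ
  refine ⟨∏ k, (r k).den, Finset.prod_pos fun k _ => (r k).pos,
    fun k => (r k).num * ∏ j ∈ Finset.univ.erase k, ((r j).den : ℤ), fun k => ?_⟩
  rw [← Finset.mul_prod_erase Finset.univ _ (Finset.mem_univ k)]
  push_cast
  rw [← mul_assoc, Rat.mul_den_eq_num]

/-- For any rationals `r₁ ≤ r₂` there is a full shift with an automorphism `φ`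
(a bijective shift-commuting block code) such that `α⁻(φ) = r₁` and `α⁺(φ) = r₂`. -/
theorem alpha_realization (r₁ r₂ : ℚ) (h : r₁ ≤ r₂) :
    ∃ (N : ℕ) (φ : (ℤ → Fin N) → (ℤ → Fin N)),
      Function.Bijective φ ∧
      (∀ x : ℤ → Fin N, φ (shift x) = shift (φ x)) ∧
      (∃ R : ℕ, Codes (Set.univ : Set (ℤ → Fin N)) φ (Set.Icc (-(R : ℤ)) (R : ℤ)) {0}) ∧
      ∃ Wp Wm : ℕ → ℤ,
        (∀ n, IsLeast (WplusSet (Set.univ : Set (ℤ → Fin N)) φ n) (Wp n)) ∧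
        (∀ n, IsGreatest (WminusSet (Set.univ : Set (ℤ → Fin N)) φ n) (Wm n)) ∧
        Tendsto (fun n : ℕ => (Wm n : ℝ) / n) atTop (𝓝 (r₁ : ℝ)) ∧
        Tendsto (fun n : ℕ => (Wp n : ℝ) / n) atTop (𝓝 (r₂ : ℝ)) := by
  set r : Fin 2 → ℚ := ![r₁, r₂]
  obtain ⟨q, hq, p, hp⟩ := exists_common_denominator r
  have hp' : ∀ k, (p k : ℝ) = (r k : ℝ) * q := fun k => by exact_mod_cast (hp k).symm
  have hr : ∀ k, (r₁ : ℝ) ≤ r k ∧ (r k : ℝ) ≤ r₂ := by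
    intro k
    fin_cases k <;> simp [r, h]
  obtain ⟨Wp, hWp, hlimp⟩ := exists_isLeast_wplusSet_rotateLayers (B := Fin 2) hq hp'
    ⟨⟨1, rfl⟩, forall_mem_range.mpr fun k => (hr k).2⟩
  obtain ⟨Wm, hWm, hlimm⟩ := exists_isGreatest_wminusSet_rotateLayers (B := Fin 2) hq hp'
    ⟨⟨0, rfl⟩, forall_mem_range.mpr fun k => (hr k).1⟩
  set e := Fintype.equivFin (Fin 2 × Fin q → Fin 2)
  obtain ⟨R, hR⟩ := exists_codes_rewire_Icc (B := Fin 2) (layerOffset q p 1) (layerIndex q 1)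
  refine ⟨_, relabel e (rotateLayers q p), relabel_bijective e (rotateLayers_bijective p),
    relabel_shift e (rewire_shift _ _), ⟨R, (codes_relabel_iff e _ _ _).mpr hR⟩, Wp, Wm,
    fun n => ?_, fun n => ?_, hlimm, hlimp⟩
  · rw [wplusSet_relabel]; exact hWp n
  · rw [wminusSet_relabel]; exact hWm n
end
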